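/- If a = x n^{-1/2} > 0 and b = x (n-k)^{-1/2} with 1 ≤ k < n, then |Φ̄(b)/Φ̄(a) − 1| ≤ (b/a − 1)(a² + 1), where Φ̄ is the standard normal tail function. -/

import Mathlib

open MeasureTheory Real

/-- The standard normal density. -/
noncomputable def stdPhi (z : ℝ) : ℝ := (Real.sqrt (2 * Real.pi))⁻¹ * Real.exp (-z ^ 2 / 2)

/-- The standard normal tail `Φ̄(z) = ∫_z^∞ φ(u) du`. -/
noncomputable def PhiBar (z : ℝ) : ℝ := ∫ u in Set.Ioi z, stdPhi u

/-!
The Mills ratio bound `Φ̄(a) ≥ a φ(a) / (a² + 1)` comes from differentiating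
`g(u) = φ(u) u / (u² + 1)`: one finds `φ + g' = 2 φ / (u² + 1)² ≥ 0`, so integrating over
`(a, ∞)` gives `Φ̄(a) ≥ g(a)`. On the other hand `φ` decreases on `[0, ∞)`, so
`Φ̄(a) - Φ̄(b) ≤ (b - a) φ(a)` for `0 ≤ a ≤ b`. Dividing the second bound by the first gives
`1 - Φ̄(b)/Φ̄(a) ≤ (b/a - 1)(a² + 1)`, and `a ≤ b` because `n - k ≤ n`.
-/

open Set Filter Topology

lemma stdPhi_pos (z : ℝ) : 0 < stdPhi z := by
  unfold stdPhi
  positivity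

lemma integrable_stdPhi : Integrable stdPhi := by
  have h := (integrable_exp_neg_mul_sq (by norm_num : (0 : ℝ) < 1 / 2)).const_mul
    (Real.sqrt (2 * Real.pi))⁻¹
  refine h.congr (ae_of_all _ fun z => ?_)
  simp only [stdPhi]
  ring_nf

lemma tendsto_stdPhi_atTop : Tendsto stdPhi atTop (𝓝 0) := by
  have h : Tendsto (fun z : ℝ => -z ^ 2 / 2) atTop atBot :=
    (tendsto_neg_atTop_atBot.comp (tendsto_pow_atTop two_ne_zero)).atBot_div_const two_pos
  have := (tendsto_exp_atBot.comp h).const_mul (Real.sqrt (2 * Real.pi))⁻¹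
  rwa [mul_zero] at this

lemma hasDerivAt_stdPhi (u : ℝ) : HasDerivAt stdPhi (-u * stdPhi u) u := by
  have h : HasDerivAt (fun z : ℝ => -z ^ 2 / 2) (-u) u := by
    simpa using ((hasDerivAt_pow 2 u).neg.div_const 2).congr_deriv (by ring)
  refine (h.exp.const_mul (Real.sqrt (2 * Real.pi))⁻¹).congr_deriv ?_
  simp only [stdPhi]
  ring

lemma stdPhi_le_stdPhi {a u : ℝ} (ha : 0 ≤ a) (hau : a ≤ u) : stdPhi u ≤ stdPhi a := by
  unfold stdPhi
  gcongr

lemma PhiBar_sub_PhiBar {a b : ℝ} (hab : a ≤ b) :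
    PhiBar a - PhiBar b = ∫ u in Ioc a b, stdPhi u := by
  rw [PhiBar, PhiBar, ← Ioc_union_Ioi_eq_Ioi hab, setIntegral_union (Ioc_disjoint_Ioi le_rfl)
    measurableSet_Ioi integrable_stdPhi.integrableOn integrable_stdPhi.integrableOn]
  ring

lemma PhiBar_antitone : Antitone PhiBar := fun a b hab => by
  have h := PhiBar_sub_PhiBar hab
  have : 0 ≤ ∫ u in Ioc a b, stdPhi u :=
    setIntegral_nonneg measurableSet_Ioc fun u _ => (stdPhi_pos u).le
  linarith

lemma PhiBar_sub_PhiBar_le {a b : ℝ} (ha : 0 ≤ a) (hab : a ≤ b) :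
    PhiBar a - PhiBar b ≤ (b - a) * stdPhi a := by
  rw [PhiBar_sub_PhiBar hab]
  calc ∫ u in Ioc a b, stdPhi u ≤ ∫ _ in Ioc a b, stdPhi a :=
        setIntegral_mono_on integrable_stdPhi.integrableOn
          (integrableOn_const measure_Ioc_lt_top.ne) measurableSet_Ioc
          fun u hu => stdPhi_le_stdPhi ha hu.1.le
    _ = (b - a) * stdPhi a := by
        rw [setIntegral_const, Real.volume_real_Ioc_of_le hab, smul_eq_mul]

lemma hasDerivAt_stdPhi_mul_div (u : ℝ) :
    HasDerivAt (fun u => stdPhi u * (u / (u ^ 2 + 1)))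
      (stdPhi u * (2 / (u ^ 2 + 1) ^ 2 - 1)) u := by
  have hden : u ^ 2 + 1 ≠ 0 := by positivity
  have h := (hasDerivAt_id' u).div ((hasDerivAt_pow 2 u).add_const 1) hden
  refine ((hasDerivAt_stdPhi u).mul h).congr_deriv ?_
  simp only [Pi.div_apply]
  field_simp
  ring

lemma abs_two_div_sq_add_one_sq_sub_one_le (u : ℝ) : |2 / (u ^ 2 + 1) ^ 2 - 1| ≤ 1 := by
  have h1 : 1 ≤ (u ^ 2 + 1) ^ 2 := one_le_pow₀ (by nlinarith)
  rw [abs_le, le_sub_iff_add_le, sub_le_iff_le_add, div_le_iff₀ (by positivity)]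
  constructor
  · norm_num; positivity
  · linarith

lemma tendsto_stdPhi_mul_div_atTop :
    Tendsto (fun u => stdPhi u * (u / (u ^ 2 + 1))) atTop (𝓝 0) := by
  refine tendsto_stdPhi_atTop.zero_mul_isBoundedUnder_le (isBoundedUnder_of ⟨1, fun u => ?_⟩)
  rw [Function.comp_apply, norm_div, Real.norm_eq_abs, Real.norm_of_nonneg (by positivity),
    div_le_one (by positivity)]
  nlinarith [sq_abs u, sq_nonneg (|u| - 1)]

theorem div_sq_add_one_mul_stdPhi_le_PhiBar (a : ℝ) :
    a / (a ^ 2 + 1) * stdPhi a ≤ PhiBar a := by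
  set g' : ℝ → ℝ := fun u => stdPhi u * (2 / (u ^ 2 + 1) ^ 2 - 1)
  have hg' : IntegrableOn g' (Ioi a) :=
    (integrable_stdPhi.mul_bdd
      ((continuous_const.div (by fun_prop) fun u => by positivity).sub
        continuous_const).aestronglyMeasurable
      (ae_of_all _ abs_two_div_sq_add_one_sq_sub_one_le)).integrableOn
  have hint : ∫ u in Ioi a, g' u = 0 - stdPhi a * (a / (a ^ 2 + 1)) :=
    integral_Ioi_of_hasDerivAt_of_tendsto' (fun u _ => hasDerivAt_stdPhi_mul_div u) hg'
      tendsto_stdPhi_mul_div_atTop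
  have hnonneg : 0 ≤ ∫ u in Ioi a, (stdPhi u + g' u) :=
    setIntegral_nonneg measurableSet_Ioi fun u _ => by
      have := stdPhi_pos u
      simp only [g']
      ring_nf
      positivity
  rw [integral_add integrable_stdPhi.integrableOn hg', hint, ← PhiBar] at hnonneg
  linarith

lemma PhiBar_pos {a : ℝ} (ha : 0 < a) : 0 < PhiBar a :=
  (by have := stdPhi_pos a; positivity : 0 < a / (a ^ 2 + 1) * stdPhi a).trans_le
    (div_sq_add_one_mul_stdPhi_le_PhiBar a)

theorem abs_PhiBar_div_PhiBar_sub_one_le {a b : ℝ} (ha : 0 < a) (hab : a ≤ b) :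
    |PhiBar b / PhiBar a - 1| ≤ (b / a - 1) * (a ^ 2 + 1) := by
  have hPa := PhiBar_pos ha
  have hφa := stdPhi_pos a
  rw [abs_sub_comm, abs_of_nonneg (sub_nonneg.2 ((div_le_one hPa).2 (PhiBar_antitone hab))),
    one_sub_div hPa.ne']
  calc (PhiBar a - PhiBar b) / PhiBar a
      ≤ (b - a) * stdPhi a / (a / (a ^ 2 + 1) * stdPhi a) :=
        div_le_div₀ (by nlinarith) (PhiBar_sub_PhiBar_le ha.le hab) (by positivity)
          (div_sq_add_one_mul_stdPhi_le_PhiBar a)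
    _ = (b / a - 1) * (a ^ 2 + 1) := by field_simp

theorem stmt8_general (x : ℝ) (n k : ℕ) (hkn : k < n)
    (a b : ℝ) (ha : a = x * ((n : ℝ)) ^ (-(1 : ℝ) / 2))
    (hb : b = x * (((n : ℝ) - (k : ℝ))) ^ (-(1 : ℝ) / 2))
    (hapos : 0 < a) :
    |PhiBar b / PhiBar a - 1| ≤ (b / a - 1) * (a ^ 2 + 1) := by
  have hnk : (0 : ℝ) < n - k := sub_pos.2 (by exact_mod_cast hkn)
  have hx : 0 < x := pos_of_mul_pos_left (ha ▸ hapos) (rpow_nonneg (Nat.cast_nonneg n) _)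
  have hab : a ≤ b := ha ▸ hb ▸ mul_le_mul_of_nonneg_left
    (rpow_le_rpow_of_nonpos hnk (sub_le_self _ k.cast_nonneg) (by norm_num)) hx.le
  exact abs_PhiBar_div_PhiBar_sub_one_le hapos hab

/-- with `a = x n^{-1/2} > 0` and `b = x (n-k)^{-1/2}`, `1 ≤ k < n`,
one has `|Φ̄(b)/Φ̄(a) − 1| ≤ (b/a − 1)(a² + 1)`. -/
theorem stmt8 (x : ℝ) (n k : ℕ) (hk : 1 ≤ k) (hkn : k < n)
    (a b : ℝ) (ha : a = x * ((n : ℝ)) ^ (-(1 : ℝ) / 2))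
    (hb : b = x * (((n : ℝ) - (k : ℝ))) ^ (-(1 : ℝ) / 2))
    (hapos : 0 < a) :
    |PhiBar b / PhiBar a - 1| ≤ (b / a - 1) * (a ^ 2 + 1) :=
  stmt8_general x n k hkn a b ha hb hapos
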